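/- The divergence-with-coaxioms semantics is the image of the trace semantics under the trace-forgetting map: c ⇒ u is derivable in (Rules_∞, coaxioms) if and only if there exists a trace result τ with u = u_forget(τ) such that c ⇒ τ is coinductively derivable in Rules_tr, where u_forget(σ, r) = r and u_forget(σ^∞) = ∞. -/

import Mathlib

/-- Judgements over configurations `C` and extended results `Option R`
    (`none` stands for the special extra result such as `?`, `wrong`, or `∞`). -/
abbrev Judg (C R : Type) := C × Option R

/-- Lift a complete judgement to an extended judgement. -/
def liftJ {C R : Type} (j : C × R) : Judg C R := (j.1, some j.2)

/-- Bounded-premises condition. -/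
def BP {C R : Type} (Rules : Set (List (C × R) × (C × R))) : Prop :=
  ∀ c : C, ∃ b : ℕ, ∀ js res, (js, (c, res)) ∈ Rules → js.length ≤ b

/-- The extended rule set `Rules_?`: original rules (lifted), start axioms
    `c ⇒ ?`, and partial rules. -/
def RulesQ {C R : Type} (Rules : Set (List (C × R) × (C × R))) :
    Set (List (Judg C R) × Judg C R) :=
  { r | (∃ c : C, r = ([], (c, none)))
      ∨ (∃ (js : List (C × R)) (c : C) (res : R), (js, (c, res)) ∈ Rules ∧ r = (js.map liftJ, (c, some res)))
      ∨ (∃ (js : List (C × R)) (c : C) (res : R) (i : ℕ) (hi : i < js.length) (u : Option R),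
          (js, (c, res)) ∈ Rules ∧
          r = ((js.take i).map liftJ ++ [((js[i]'hi).1, u)], (c, none))) }

/-- Ordered trees labelled in `L`: partial functions from positions (lists of
    child indices) to labels, with nonempty, prefix-closed,
    sibling-downward-closed domain. -/
structure OTree (L : Type) where
  label : List ℕ → Option L
  root_isSome : (label []).isSome
  pref : ∀ α n, (label (α ++ [n])).isSome → (label α).isSome
  sib : ∀ α n k, (label (α ++ [n])).isSome → k ≤ n → (label (α ++ [k])).isSome

/-- A tree is an evaluation tree in a rule set: at every node, the ordered
    children labels together with the node label form a rule. -/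
def IsTreeIn {L : Type} (Rules : Set (List L × L)) (t : OTree L) : Prop :=
  ∀ α l, t.label α = some l →
    ∃ ps : List L, (∀ i : ℕ, t.label (α ++ [i]) = ps[i]?) ∧ (ps, l) ∈ Rules

/-- Partial evaluation trees: evaluation trees in `Rules_?`. -/
def IsPET {C R : Type} (Rules : Set (List (C × R) × (C × R)))
    (t : OTree (Judg C R)) : Prop :=
  IsTreeIn (RulesQ Rules) t

/-- The refinement relation `⊑` on trees labelled by possibly-incomplete
    judgements. -/
def TreeLE {C R : Type} (t t' : OTree (Judg C R)) : Prop :=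
  (∀ α, (t.label α).isSome → (t'.label α).isSome) ∧
  ∀ α c u, t.label α = some (c, u) →
    (∃ (u' : Option R), t'.label α = some (c, u')) ∧
    (u.isSome → ∀ β, t.label (α ++ β) = t'.label (α ++ β))

/-- Strict refinement `⊏`. -/
def TreeLT {C R : Type} (t t' : OTree (Judg C R)) : Prop :=
  TreeLE t t' ∧ t ≠ t'

/-- A tree is finite if its domain is finite. -/
def TreeFinite {L : Type} (t : OTree L) : Prop :=
  Set.Finite {α | (t.label α).isSome}

/-- Well-formedness: every subtree rooted at a complete node is finite. -/
def WellFormed {C R : Type} (t : OTree (Judg C R)) : Prop :=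
  ∀ α c r, t.label α = some (c, some r) →
    Set.Finite {β | (t.label (α ++ β)).isSome}

/-- `t` is a least upper bound of the sequence `f` w.r.t. `⊑`. -/
def IsLubSeq {C R : Type} (f : ℕ → OTree (Judg C R)) (t : OTree (Judg C R)) : Prop :=
  (∀ n, TreeLE (f n) t) ∧ ∀ t', (∀ n, TreeLE (f n) t') → TreeLE t t'

/-- Inductive derivability in a rule set with finite-list premises. -/
inductive IndDerives {J : Type} (Rules : Set (List J × J)) : J → Prop where
  | node (ps : List J) (j : J) : (ps, j) ∈ Rules →
      (∀ p ∈ ps, IndDerives Rules p) → IndDerives Rules j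

/-- A set of judgements is consistent w.r.t. a rule set. -/
def ConsistentL {J : Type} (Rules : Set (List J × J)) (X : Set J) : Prop :=
  ∀ j ∈ X, ∃ (ps : List J), (ps, j) ∈ Rules ∧ ∀ p ∈ ps, p ∈ X

/-- Coinductive derivability: membership in some consistent set. -/
def CoDerives {J : Type} (Rules : Set (List J × J)) (j : J) : Prop :=
  ∃ (X : Set J), ConsistentL Rules X ∧ j ∈ X

/-- Derivability in a generalised inference system (rules + corules):
    membership in a consistent set all of whose elements have a finite
    derivation using both rules and corules. -/
def GenDerives {J : Type} (rules corules : Set (List J × J)) (j : J) : Prop :=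
  ∃ (X : Set J), ConsistentL rules X ∧ (∀ x ∈ X, IndDerives (rules ∪ corules) x) ∧ j ∈ X
/-- Trace results: a finite trace paired with a result, or an infinite trace. -/
abbrev TrRes (C R : Type) := (List C × R) ⊕ Stream' C

/-- The trace-extended rule set `Rules_tr`: finite-trace rules and
    infinite-trace rules. -/
def RulesTr {C R : Type} (Rules : Set (List (C × R) × (C × R))) :
    Set (List (C × TrRes C R) × (C × TrRes C R)) :=
  { r | (∃ (js : List (C × R)) (c : C) (res : R) (σs : List (List C)),
          (js, (c, res)) ∈ Rules ∧ σs.length = js.length ∧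
          r = ((js.zip σs).map (fun p => (p.1.1, Sum.inl (p.2, p.1.2))),
               (c, Sum.inl (c :: σs.flatten, res))))
      ∨ (∃ (js : List (C × R)) (c : C) (res : R) (i : ℕ) (hi : i < js.length)
            (σs : List (List C)) (σ : Stream' C),
          (js, (c, res)) ∈ Rules ∧ σs.length = i ∧
          r = (((js.take i).zip σs).map (fun p => (p.1.1, Sum.inl (p.2, p.1.2))) ++
                 [((js[i]'hi).1, Sum.inr σ)],
               (c, Sum.inr ((c :: σs.flatten) ++ₛ σ)))) }

/-- Equality of rules up to an index `i`: same conclusion configuration, same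
    first `i` premises, same configuration in the `(i+1)`-th premise
    (`i` is 0-based here), with a prescribed result `r'` in that premise. -/
def AgreeUpTo {C R : Type} (Rules : Set (List (C × R) × (C × R)))
    (js : List (C × R)) (c : C) (i : ℕ) (hi : i < js.length) (r' : R) : Prop :=
  ∃ (js' : List (C × R)) (res' : R) (hi' : i < js'.length),
    (js', (c, res')) ∈ Rules ∧ js'.take i = js.take i ∧
    (js'[i]'hi').1 = (js[i]'hi).1 ∧ (js'[i]'hi').2 = r'

/-- The wrong-extended rule set `Rules_wr` over results `R + {wrong}`
    (`none` stands for `wrong`): original rules, wrong-configuration axioms,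
    wrong-result rules and wrong-propagation rules. -/
def RulesWr {C R : Type} (Rules : Set (List (C × R) × (C × R))) :
    Set (List (Judg C R) × Judg C R) :=
  { r | (∃ (js : List (C × R)) (c : C) (res : R),
          (js, (c, res)) ∈ Rules ∧ r = (js.map liftJ, (c, some res)))
      ∨ (∃ (c : C), (¬ ∃ (js : List (C × R)) (res : R), (js, (c, res)) ∈ Rules) ∧
          r = ([], (c, none)))
      ∨ (∃ (js : List (C × R)) (c : C) (res : R) (i : ℕ) (hi : i < js.length) (r' : R),
          (js, (c, res)) ∈ Rules ∧ ¬ AgreeUpTo Rules js c i hi r' ∧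
          r = ((js.take i).map liftJ ++ [((js[i]'hi).1, some r')], (c, none)))
      ∨ (∃ (js : List (C × R)) (c : C) (res : R) (i : ℕ) (hi : i < js.length),
          (js, (c, res)) ∈ Rules ∧
          r = ((js.take i).map liftJ ++ [((js[i]'hi).1, none)], (c, none))) }

/-- The divergence-extended rule set `Rules_∞` over results `R + {∞}`
    (`none` stands for `∞`): original rules plus divergence-propagation
    rules. -/
def RulesInf {C R : Type} (Rules : Set (List (C × R) × (C × R))) :
    Set (List (Judg C R) × Judg C R) :=
  { r | (∃ (js : List (C × R)) (c : C) (res : R),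
          (js, (c, res)) ∈ Rules ∧ r = (js.map liftJ, (c, some res)))
      ∨ (∃ (js : List (C × R)) (c : C) (res : R) (i : ℕ) (hi : i < js.length),
          (js, (c, res)) ∈ Rules ∧
          r = ((js.take i).map liftJ ++ [((js[i]'hi).1, none)], (c, none))) }

/-- The coaxioms for divergence: `c ⇒ ∞` for every configuration `c`. -/
def CoAx (C R : Type) : Set (List (Judg C R) × Judg C R) :=
  { r | ∃ (c : C), r = ([], (c, none)) }

/-- The trace-forgetting map: `(σ, r) ↦ r` and `σ^∞ ↦ ∞`. -/
def uForget {C R : Type} : TrRes C R → Option R :=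
  Sum.elim (fun p => some p.2) (fun _ => none)

/- A derivation with coaxioms of `c ⇒ r` is finite and uses only the original rules, so it
carries a finite trace; a coinductive derivation of `c ⇒ ∞` follows an infinite chain of
divergence-propagation rules, and the infinite trace is obtained by concatenating, along that
chain, each configuration with the finite traces of the premises preceding the diverging one.
Conversely, forgetting traces maps `Rules_tr` rules to `Rules_∞` rules, so the image of a
consistent set is consistent; its finite-trace judgements have finite derivations by
induction on the trace length, and its `∞` judgements are coaxioms. -/

theorem List.exists_forall₂_of_forall_mem_exists {α β : Type*} {P : α → β → Prop} :
    ∀ l : List α, (∀ a ∈ l, ∃ b, P a b) → ∃ l', List.Forall₂ P l l'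
  | [], _ => ⟨[], .nil⟩
  | a :: l, h => by
    obtain ⟨b, hb⟩ := h a List.mem_cons_self
    obtain ⟨l', hl'⟩ := exists_forall₂_of_forall_mem_exists l fun x hx => h x (.tail a hx)
    exact ⟨b :: l', .cons hb hl'⟩

theorem Stream'.exists_eq_cons_append {α D : Type*} (hd : D → α) (tl : D → List α)
    (next : D → D) : ∃ s : D → Stream' α, ∀ d, s d = (hd d :: tl d) ++ₛ s (next d) := by
  let out : List α × D → α := fun
    | (x :: _, _) => x
    | ([], d) => hd d
  let step : List α × D → List α × D := fun
    | (_ :: rest, d) => (rest, d)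
    | ([], d) => (tl d, next d)
  have corec_buffer : ∀ (buf : List α) (d : D),
      Stream'.corec out step (buf, d) = buf ++ₛ Stream'.corec out step ([], d) := by
    intro buf d
    induction buf with
    | nil => rfl
    | cons x rest ih => rw [Stream'.corec_eq, Stream'.cons_append_stream, ← ih]
  refine ⟨fun d => Stream'.corec out step ([], d), fun d => ?_⟩
  show Stream'.corec out step ([], d) = _
  rw [Stream'.corec_eq, Stream'.cons_append_stream, ← corec_buffer]

section Derivability

variable {J : Type} {Rs : Set (List J × J)}

theorem ConsistentL.image {J' : Type} {Rs' : Set (List J' × J')} {X : Set J} (f : J → J')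
    (hf : ∀ ps j, (ps, j) ∈ Rs → (ps.map f, f j) ∈ Rs') (hX : ConsistentL Rs X) :
    ConsistentL Rs' (f '' X) := by
  rintro _ ⟨j, hj, rfl⟩
  obtain ⟨ps, hr, hps⟩ := hX j hj
  exact ⟨ps.map f, hf ps j hr, by
    simpa only [List.forall_mem_map] using fun p hp => Set.mem_image_of_mem f (hps p hp)⟩

theorem CoDerives.coinduct (X : Set J)
    (hX : ∀ j ∈ X, ∃ ps, (ps, j) ∈ Rs ∧ ∀ p ∈ ps, p ∈ X ∨ CoDerives Rs p) :
    ∀ j ∈ X, CoDerives Rs j := by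
  intro j hj
  refine ⟨X ∪ {p | CoDerives Rs p}, ?_, .inl hj⟩
  rintro k (hk | ⟨Y, hY, hkY⟩)
  · exact hX k hk
  · obtain ⟨ps, hr, hps⟩ := hY k hkY
    exact ⟨ps, hr, fun p hp => .inr ⟨Y, hY, hps p hp⟩⟩

theorem CoDerives.of_rule {ps : List J} {j : J} (hr : (ps, j) ∈ Rs)
    (hps : ∀ p ∈ ps, CoDerives Rs p) : CoDerives Rs j :=
  CoDerives.coinduct {j} (fun _ hk => ⟨ps, hk ▸ hr, fun p hp => .inr (hps p hp)⟩) j rfl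

end Derivability

section TraceSemantics

variable {C R : Type} {Rules : Set (List (C × R) × (C × R))}

def forgetJudg (j : C × TrRes C R) : Judg C R := (j.1, uForget j.2)

def trPremises (js : List (C × R)) (σs : List (List C)) : List (C × TrRes C R) :=
  (js.zip σs).map fun p => (p.1.1, Sum.inl (p.2, p.1.2))

theorem map_forgetJudg_trPremises {js : List (C × R)} {σs : List (List C)}
    (h : js.length ≤ σs.length) : (trPremises js σs).map forgetJudg = js.map liftJ := by
  conv_rhs => rw [← List.map_fst_zip h]
  simp only [trPremises, List.map_map]
  rfl

theorem forall_mem_trPremises_of_forall₂ {js : List (C × R)} {σs : List (List C)}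
    {P : C × TrRes C R → Prop} (h : List.Forall₂ (fun p σ => P (p.1, Sum.inl (σ, p.2))) js σs) :
    ∀ q ∈ trPremises js σs, P q := by
  simpa only [trPremises, List.forall_mem_map] using fun _ hp => (List.forall₂_iff_zip.mp h).2 hp

theorem map_forgetJudg_mem_rulesInf {ps : List (C × TrRes C R)} {j : C × TrRes C R}
    (h : (ps, j) ∈ RulesTr Rules) : (ps.map forgetJudg, forgetJudg j) ∈ RulesInf Rules := by
  rcases h with ⟨js, c, res, σs, hr, hlen, h⟩ | ⟨js, c, res, i, hi, σs, σ, hr, hlen, h⟩ <;>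
    obtain ⟨rfl, rfl⟩ := Prod.mk.inj h
  · exact .inl ⟨js, c, res, hr, by rw [← trPremises, map_forgetJudg_trPremises hlen.ge]; rfl⟩
  · refine .inr ⟨js, c, res, i, hi, hr, ?_⟩
    have hlen' : (js.take i).length ≤ σs.length := by simp [hlen]
    rw [List.map_append, ← trPremises, map_forgetJudg_trPremises hlen']
    rfl

theorem exists_rule_of_mem_rulesInf_union_coAx_some {ps : List (Judg C R)} {c : C} {r : R}
    (h : (ps, (c, some r)) ∈ RulesInf Rules ∪ CoAx C R) :
    ∃ js, (js, (c, r)) ∈ Rules ∧ ps = js.map liftJ := by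
  rcases h with (⟨js, c', r', hr, h⟩ | ⟨_, _, _, _, _, _, h⟩) | ⟨_, h⟩ <;>
    simp only [Prod.mk.injEq, reduceCtorEq, and_false, Option.some.injEq] at h
  obtain ⟨rfl, rfl, rfl⟩ := h
  exact ⟨js, hr, rfl⟩

theorem exists_rule_of_mem_rulesInf_none {ps : List (Judg C R)} {c : C}
    (h : (ps, (c, none)) ∈ RulesInf Rules) :
    ∃ (js : List (C × R)) (res : R) (i : ℕ) (hi : i < js.length), (js, (c, res)) ∈ Rules ∧
      ps = (js.take i).map liftJ ++ [((js[i]'hi).1, none)] := by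
  rcases h with ⟨_, _, _, _, h⟩ | ⟨js, c', res, i, hi, hr, h⟩ <;>
    simp only [Prod.mk.injEq, reduceCtorEq, and_false] at h
  obtain ⟨rfl, rfl, -⟩ := h
  exact ⟨js, res, i, hi, hr, rfl⟩

theorem exists_coDerives_inl_of_indDerives {c : C} {r : R}
    (h : IndDerives (RulesInf Rules ∪ CoAx C R) (c, some r)) :
    ∃ σ, CoDerives (RulesTr Rules) (c, Sum.inl (σ, r)) := by
  generalize hj : ((c, some r) : Judg C R) = j at h
  induction h generalizing c r with
  | node ps j hr _ ih =>
    subst hj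
    obtain ⟨js, hrule, rfl⟩ := exists_rule_of_mem_rulesInf_union_coAx_some hr
    obtain ⟨σs, hσs⟩ := js.exists_forall₂_of_forall_mem_exists fun p hp =>
      ih (liftJ p) (List.mem_map_of_mem hp) rfl
    exact ⟨c :: σs.flatten, .of_rule (.inl ⟨js, c, r, σs, hrule, hσs.length_eq.symm, rfl⟩)
      (forall_mem_trPremises_of_forall₂ hσs)⟩

theorem exists_divergence_step {X : Set (Judg C R)} (hX : ConsistentL (RulesInf Rules) X)
    (hind : ∀ x ∈ X, IndDerives (RulesInf Rules ∪ CoAx C R) x) {c : C} (hc : (c, none) ∈ X) :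
    ∃ (js : List (C × R)) (res : R) (i : ℕ) (hi : i < js.length) (σs : List (List C)),
      (js, (c, res)) ∈ Rules ∧ σs.length = i ∧
      List.Forall₂ (fun p σ => CoDerives (RulesTr Rules) (p.1, Sum.inl (σ, p.2)))
        (js.take i) σs ∧
      ((js[i]'hi).1, none) ∈ X := by
  obtain ⟨ps, hr, hps⟩ := hX _ hc
  obtain ⟨js, res, i, hi, hrule, rfl⟩ := exists_rule_of_mem_rulesInf_none hr
  obtain ⟨σs, hσs⟩ := (js.take i).exists_forall₂_of_forall_mem_exists fun p hp =>
    exists_coDerives_inl_of_indDerives (c := p.1) (r := p.2)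
      (hind _ (hps _ (List.mem_append_left _ (List.mem_map_of_mem hp))))
  exact ⟨js, res, i, hi, σs, hrule, by simp [← hσs.length_eq, hi.le], hσs,
    hps _ (by simp)⟩

theorem exists_coDerives_inr_of_consistent {X : Set (Judg C R)}
    (hX : ConsistentL (RulesInf Rules) X)
    (hind : ∀ x ∈ X, IndDerives (RulesInf Rules ∪ CoAx C R) x) {c : C} (hc : (c, none) ∈ X) :
    ∃ σ, CoDerives (RulesTr Rules) (c, Sum.inr σ) := by
  let D := {c : C // (c, none) ∈ X}
  choose js res i hi σs hrule hlen hσs hnext using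
    fun d : D => exists_divergence_step hX hind d.2
  let next : D → D := fun d => ⟨((js d)[i d]'(hi d)).1, hnext d⟩
  obtain ⟨s, hs⟩ := Stream'.exists_eq_cons_append (fun d : D => d.1) (fun d => (σs d).flatten) next
  refine ⟨s ⟨c, hc⟩, CoDerives.coinduct {j | ∃ d : D, j = (d.1, Sum.inr (s d))} ?_ _ ⟨⟨c, hc⟩, rfl⟩⟩
  rintro _ ⟨d, rfl⟩
  refine ⟨trPremises ((js d).take (i d)) (σs d) ++ [((next d).1, Sum.inr (s (next d)))],
    .inr ⟨js d, d.1, res d, i d, hi d, σs d, s (next d), hrule d, hlen d, by rw [← hs]; rfl⟩, ?_⟩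
  simp only [List.mem_append, List.mem_singleton]
  rintro p (hp | rfl)
  · exact .inr (forall_mem_trPremises_of_forall₂ (hσs d) p hp)
  · exact .inl ⟨next d, rfl⟩

theorem trace_length_lt_of_mem_rulesTr {ps : List (C × TrRes C R)} {c : C} {σ : List C} {r : R}
    (h : (ps, (c, Sum.inl (σ, r))) ∈ RulesTr Rules) :
    ∀ p ∈ ps, ∃ σ' r', p.2 = Sum.inl (σ', r') ∧ σ'.length < σ.length := by
  rcases h with ⟨js, c', r', σs, -, -, h⟩ | ⟨_, _, _, _, _, _, _, -, -, h⟩ <;>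
    simp only [Prod.mk.injEq, Sum.inl.injEq, reduceCtorEq, and_false] at h
  obtain ⟨rfl, -, rfl, -⟩ := h
  simp only [List.forall_mem_map]
  rintro ⟨p, σ'⟩ hp
  have : σ'.length ≤ σs.flatten.length :=
    (List.sublist_flatten_of_mem (List.of_mem_zip hp).2).length_le
  exact ⟨σ', p.2, rfl, by simp only [List.length_cons]; omega⟩

theorem indDerives_forgetJudg {Y : Set (C × TrRes C R)} (hY : ConsistentL (RulesTr Rules) Y)
    {j : C × TrRes C R} (hj : j ∈ Y) : IndDerives (RulesInf Rules ∪ CoAx C R) (forgetJudg j) := by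
  obtain ⟨c, ⟨σ, r⟩ | σ⟩ := j
  · induction hσ : σ.length using Nat.strong_induction_on generalizing c σ r with
    | _ n ih =>
      obtain ⟨ps, hr, hps⟩ := hY _ hj
      refine .node _ _ (.inl (map_forgetJudg_mem_rulesInf hr)) ?_
      simp only [List.forall_mem_map]
      intro p hp
      obtain ⟨σ', r', hp2, hlt⟩ := trace_length_lt_of_mem_rulesTr hr p hp
      obtain ⟨c', τ⟩ := p
      subst hp2
      exact ih _ (hσ ▸ hlt) c' σ' r' (hps _ hp) rfl
  · exact .node [] _ (.inr ⟨c, rfl⟩) (by simp)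

end TraceSemantics

theorem div_abstracts_traces_general {C R : Type}
    (Rules : Set (List (C × R) × (C × R)))
    (c : C) (u : Option R) :
    GenDerives (RulesInf Rules) (CoAx C R) ((c, u) : Judg C R) ↔
      ∃ τ : TrRes C R, u = uForget τ ∧ CoDerives (RulesTr Rules) (c, τ) := by
  constructor
  · rintro ⟨X, hX, hind, hmem⟩
    cases u with
    | none =>
      obtain ⟨σ, hσ⟩ := exists_coDerives_inr_of_consistent hX hind hmem
      exact ⟨Sum.inr σ, rfl, hσ⟩
    | some r =>
      obtain ⟨σ, hσ⟩ := exists_coDerives_inl_of_indDerives (hind _ hmem)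
      exact ⟨Sum.inl (σ, r), rfl, hσ⟩
  · rintro ⟨τ, rfl, Y, hY, hmem⟩
    refine ⟨forgetJudg '' Y, hY.image forgetJudg fun _ _ => map_forgetJudg_mem_rulesInf, ?_,
      ⟨_, hmem, rfl⟩⟩
    rintro _ ⟨j, hj, rfl⟩
    exact indDerives_forgetJudg hY hj

/-- the divergence-with-coaxioms semantics is the image of the
    trace semantics under the trace-forgetting map. -/
theorem div_abstracts_traces {C R : Type}
    (Rules : Set (List (C × R) × (C × R))) (hbp : BP Rules)
    (c : C) (u : Option R) :
    GenDerives (RulesInf Rules) (CoAx C R) ((c, u) : Judg C R) ↔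
      ∃ τ : TrRes C R, u = uForget τ ∧ CoDerives (RulesTr Rules) (c, τ) :=
  div_abstracts_traces_general Rules c u
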